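/- Let V be a real inner product space, ξ a unit vector orthogonal to V inside V̂ = ℝξ ⊕ V, T ∈ so(V) extended to V̂ by Tξ = 0, and Z ∈ V a cyclic vector for T on V. If dim V ≥ 1, then the Lie subalgebra of so(V̂) generated by the elements ξ ∧ T^k Z for k = 0, 1, 2, … is all of so(V̂). -/

import Mathlib

open scoped RealInnerProductSpace

attribute [local instance] LieRing.ofAssociativeRing

/-- The skew endomorphism `u ∧ v : x ↦ ⟨u,x⟩v - ⟨v,x⟩u`. -/
noncomputable def wedge {V : Type*} [NormedAddCommGroup V] [InnerProductSpace ℝ V]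
    (u v : V) : Module.End ℝ V :=
  ((innerSL ℝ u).toLinearMap.smulRight v) - ((innerSL ℝ v).toLinearMap.smulRight u)

/-!
By linearity of `w ↦ ξ ∧ w`, cyclicity of `Z` puts `ξ ∧ w` in the generated Lie algebra for every
`w ⊥ ξ`, hence (as `ξ ∧ ξ = 0`) for every `w`. For `u, v ⊥ ξ` the bracket `⁅ξ ∧ u, ξ ∧ v⁆` is
`u ∧ v`, so every wedge is generated, and wedges span `so(V̂)`: a skew-adjoint `f` equals
`½ ∑ᵢ bᵢ ∧ f bᵢ` for any orthonormal basis `b`.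
-/

lemma mem_skewAdjointLieSubalgebra_iff {R M : Type*} [CommRing R] [AddCommGroup M] [Module R M]
    (B : LinearMap.BilinForm R M) {f : Module.End R M} :
    f ∈ skewAdjointLieSubalgebra B ↔ B.IsSkewAdjoint f := by
  rw [skewAdjointLieSubalgebra, LieSubalgebra.mem_mk_iff', LinearMap.mem_skewAdjointSubmodule]

lemma Submodule.eq_top_of_mem_of_orthogonal_le {𝕜 E : Type*} [RCLike 𝕜] [NormedAddCommGroup E]
    [InnerProductSpace 𝕜 E] {P : Submodule 𝕜 E} {ξ : E} (hξ : ξ ∈ P) (h : (𝕜 ∙ ξ)ᗮ ≤ P) :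
    P = ⊤ :=
  top_le_iff.mp <| (Submodule.sup_orthogonal_of_hasOrthogonalProjection (K := 𝕜 ∙ ξ)).ge.trans <|
    sup_le ((Submodule.span_singleton_le_iff_mem _ _).mpr hξ) h

section

variable {V : Type*} [NormedAddCommGroup V] [InnerProductSpace ℝ V]

lemma wedge_apply (u v x : V) : wedge u v x = ⟪u, x⟫ • v - ⟪v, x⟫ • u := rfl

@[simp] lemma wedge_self (u : V) : wedge u u = 0 := by
  ext x; simp [wedge_apply]

lemma wedge_anticomm (u v : V) : -wedge u v = wedge v u := by
  ext x; simp [wedge_apply]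

noncomputable def wedgeₗ (u : V) : V →ₗ[ℝ] Module.End ℝ V where
  toFun := wedge u
  map_add' v w := by
    ext x
    simp only [wedge_apply, LinearMap.add_apply, inner_add_left, add_smul, smul_add]
    abel
  map_smul' c v := by
    ext x
    simp only [wedge_apply, LinearMap.smul_apply, real_inner_smul_left, smul_smul, smul_sub,
      RingHom.id_apply, mul_comm]

lemma wedgeₗ_apply (u v : V) : wedgeₗ u v = wedge u v := rfl

lemma wedge_mem_skewAdjointLieSubalgebra (u v : V) :
    wedge u v ∈ skewAdjointLieSubalgebra (innerₗ V) := by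
  rw [mem_skewAdjointLieSubalgebra_iff]
  intro x y
  simp only [innerₗ_apply_apply, Pi.neg_apply, wedge_apply, inner_sub_left, inner_sub_right,
    real_inner_smul_left, real_inner_smul_right, inner_neg_right, real_inner_comm x]
  ring

lemma lie_wedge_wedge {ξ u v : V} (hξ : ‖ξ‖ = 1) (hu : ⟪ξ, u⟫ = 0) (hv : ⟪ξ, v⟫ = 0) :
    ⁅wedge ξ u, wedge ξ v⁆ = wedge u v := by
  ext x
  simp only [Ring.lie_def, LinearMap.sub_apply, Module.End.mul_apply, wedge_apply,
    inner_sub_right, real_inner_smul_right, real_inner_self_eq_norm_sq, hξ, hu, hv,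
    real_inner_comm ξ u, real_inner_comm ξ v, real_inner_comm u v]
  module

lemma mem_skewAdjointLieSubalgebra_innerₗ_iff [FiniteDimensional ℝ V] {f : Module.End ℝ V} :
    f ∈ skewAdjointLieSubalgebra (innerₗ V) ↔ LinearMap.adjoint f = -f := by
  rw [mem_skewAdjointLieSubalgebra_iff, eq_comm, LinearMap.eq_adjoint_iff]
  simp only [LinearMap.IsSkewAdjoint, LinearMap.IsAdjointPair, innerₗ_apply_apply,
    LinearMap.neg_apply, Pi.neg_apply, inner_neg_left, inner_neg_right, neg_eq_iff_eq_neg]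

lemma sum_wedge_eq_two_smul {ι : Type*} [Fintype ι] (b : OrthonormalBasis ι ℝ V)
    {f : Module.End ℝ V} (hf : (innerₗ V).IsSkewAdjoint f) :
    ∑ i, wedge (b i) (f (b i)) = (2 : ℝ) • f := by
  ext x
  have hfb : ∑ i, ⟪f (b i), x⟫ • b i = -f x := by
    simp_rw [show ∀ i, ⟪f (b i), x⟫ = -⟪b i, f x⟫ from fun i ↦
      (hf (b i) x).trans (inner_neg_right _ _)]
    simp only [neg_smul, Finset.sum_neg_distrib, b.sum_repr']
  have hbf : ∑ i, ⟪b i, x⟫ • f (b i) = f x := by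
    simp_rw [← map_smul, ← map_sum, b.sum_repr']
  simp only [LinearMap.sum_apply, wedge_apply, Finset.sum_sub_distrib, hfb, hbf,
    LinearMap.smul_apply]
  module

lemma skewAdjointLieSubalgebra_le_of_forall_wedge_mem [FiniteDimensional ℝ V]
    {L : LieSubalgebra ℝ (Module.End ℝ V)} (hL : ∀ u v : V, wedge u v ∈ L) :
    skewAdjointLieSubalgebra (innerₗ V) ≤ L := by
  intro f hf
  have hsum := sum_wedge_eq_two_smul (stdOrthonormalBasis ℝ V)
    ((mem_skewAdjointLieSubalgebra_iff _).mp hf)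
  have h2 : (2 : ℝ) • f ∈ L := hsum ▸ L.toSubmodule.sum_mem fun i _ ↦ hL _ _
  simpa using L.smul_mem (2⁻¹ : ℝ) h2

lemma forall_wedge_mem_of_orthogonal {L : LieSubalgebra ℝ (Module.End ℝ V)} {ξ u : V}
    (hξ : wedge u ξ ∈ L) (h : ∀ v ∈ (ℝ ∙ ξ)ᗮ, wedge u v ∈ L) (v : V) : wedge u v ∈ L :=
  (Submodule.eq_top_of_mem_of_orthogonal_le (P := L.toSubmodule.comap (wedgeₗ u)) hξ h).ge
    Submodule.mem_top

lemma wedge_mem_of_forall_wedge_mem {L : LieSubalgebra ℝ (Module.End ℝ V)} {ξ : V}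
    (hξ : ‖ξ‖ = 1) (hL : ∀ w ∈ (ℝ ∙ ξ)ᗮ, wedge ξ w ∈ L) (u v : V) : wedge u v ∈ L := by
  have hξL : ∀ w, wedge ξ w ∈ L :=
    forall_wedge_mem_of_orthogonal (by simp [L.zero_mem]) hL
  have horth : ∀ u ∈ (ℝ ∙ ξ)ᗮ, ∀ v, wedge u v ∈ L := by
    intro u hu
    refine forall_wedge_mem_of_orthogonal (ξ := ξ) ?_ fun v hv ↦ ?_
    · simpa [wedge_anticomm] using L.neg_mem (hξL u)
    · rw [Submodule.mem_orthogonal_singleton_iff_inner_right] at hu hv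
      rw [← lie_wedge_wedge hξ hu hv]
      exact L.lie_mem (hξL u) (hξL v)
  rw [← wedge_anticomm]
  refine L.neg_mem (forall_wedge_mem_of_orthogonal (ξ := ξ) ?_ (fun u hu ↦ ?_) u)
  · simpa [wedge_anticomm] using L.neg_mem (hξL v)
  · simpa [wedge_anticomm] using L.neg_mem (horth u hu v)

end

theorem lieSpan_wedge_eq_so_general
    {W : Type*} [NormedAddCommGroup W] [InnerProductSpace ℝ W] [FiniteDimensional ℝ W]
    (ξ : W) (hξ : ‖ξ‖ = 1)
    (T : Module.End ℝ W)
    (Z : W)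
    (hcyc : Submodule.span ℝ (Set.range fun k : ℕ => (T ^ k) Z) = (ℝ ∙ ξ)ᗮ) :
    ∀ f : Module.End ℝ W,
      f ∈ LieSubalgebra.lieSpan ℝ (Module.End ℝ W)
          (Set.range fun k : ℕ => wedge ξ ((T ^ k) Z)) ↔
        LinearMap.adjoint f = -f := by
  set L := LieSubalgebra.lieSpan ℝ (Module.End ℝ W) (Set.range fun k : ℕ => wedge ξ ((T ^ k) Z))
  have hgen : ∀ w ∈ (ℝ ∙ ξ)ᗮ, wedge ξ w ∈ L := by
    suffices Submodule.span ℝ (Set.range fun k : ℕ => (T ^ k) Z) ≤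
        L.toSubmodule.comap (wedgeₗ ξ) by rwa [hcyc] at this
    rw [Submodule.span_le]
    rintro _ ⟨k, rfl⟩
    exact LieSubalgebra.subset_lieSpan ⟨k, rfl⟩
  have hL : L = skewAdjointLieSubalgebra (innerₗ W) :=
    le_antisymm
      (LieSubalgebra.lieSpan_le.mpr <| Set.range_subset_iff.mpr fun k ↦
        wedge_mem_skewAdjointLieSubalgebra _ _)
      (skewAdjointLieSubalgebra_le_of_forall_wedge_mem (wedge_mem_of_forall_wedge_mem hξ hgen))
  intro f
  rw [hL, mem_skewAdjointLieSubalgebra_innerₗ_iff]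

/-- If `Z` is a cyclic vector for `T ∈ so(V)` (with `V = ξ^⊥`, `T ξ = 0`), then the Lie
subalgebra of `so(V̂)` generated by the `ξ ∧ T^k Z` is all of `so(V̂)`. -/
theorem lieSpan_wedge_eq_so
    {W : Type*} [NormedAddCommGroup W] [InnerProductSpace ℝ W] [FiniteDimensional ℝ W]
    (ξ : W) (hξ : ‖ξ‖ = 1)
    (hdim : 1 ≤ Module.finrank ℝ ((ℝ ∙ ξ)ᗮ : Submodule ℝ W))
    (T : Module.End ℝ W) (hskew : ∀ x y : W, ⟪T x, y⟫ = -⟪x, T y⟫)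
    (hTξ : T ξ = 0)
    (Z : W) (hZmem : Z ∈ (ℝ ∙ ξ)ᗮ)
    (hcyc : Submodule.span ℝ (Set.range fun k : ℕ => (T ^ k) Z) = (ℝ ∙ ξ)ᗮ) :
    ∀ f : Module.End ℝ W,
      f ∈ LieSubalgebra.lieSpan ℝ (Module.End ℝ W)
          (Set.range fun k : ℕ => wedge ξ ((T ^ k) Z)) ↔
        LinearMap.adjoint f = -f :=
  lieSpan_wedge_eq_so_general ξ hξ T Z hcyc
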